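/- arXiv:1810.05690 — 10 statements merged into one kernel-verified Lean document; each statement's English description precedes it below -/
import Mathlib

section
/- Let n ≥ 2, N = n+1, and let A be the n×n real matrix with A_{ij} = 1 if i ≥ j and A_{ij} = 0 otherwise. Then det A = 1, and the image under x ↦ A x of the set {±(e_{i−1} − e_i) : 1 ≤ i ≤ N} equals {±e_1, …, ±e_n, ±(e_1 + ⋯ + e_n)}; consequently A maps the adjacency polytope P_{C_N} = conv({±(e_{i−1} − e_i) : 1 ≤ i ≤ N}) bijectively onto Q_N = conv({±e_1, …, ±e_n, ±(e_1 + ⋯ + e_n)}). -/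
open Finset

/-- `eVec n k` is the standard basis vector `e_k` of `ℝ^n` for `1 ≤ k ≤ n`,
with the convention `e_0 = e_{n+1} = 0`. -/
noncomputable def eVec (n : ℕ) (k : ℕ) : Fin n → ℝ := fun t => if (t : ℕ) + 1 = k then 1 else 0

/-- `dVec n i = e_{i-1} - e_i`. -/
noncomputable def dVec (n : ℕ) (i : ℕ) : Fin n → ℝ := eVec n (i - 1) - eVec n i

lemma mulVec_eVec (n : ℕ) (A : Matrix (Fin n) (Fin n) ℝ)
    (hA : ∀ i j : Fin n, A i j = if (j : ℕ) ≤ (i : ℕ) then 1 else 0)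
    (k : ℕ) (hk1 : 1 ≤ k) (hk2 : k ≤ n) :
    A.mulVec (eVec n k) = fun (t : Fin n) => if k ≤ (t : ℕ) + 1 then (1:ℝ) else 0 := by
  funext t
  simp only [Matrix.mulVec, dotProduct, eVec, hA]
  rw [Finset.sum_eq_single (⟨k - 1, by omega⟩ : Fin n)]
  · simp only []
    by_cases h : k ≤ (t : ℕ) + 1 <;> simp [h] <;> omega
  · intro j _ hj
    have : (j : ℕ) + 1 ≠ k := by
      intro h; apply hj; apply Fin.ext; simp; omega
    simp [this]
  · simp

lemma eVec_zero (n : ℕ) : eVec n 0 = 0 := by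
  funext t; simp [eVec]

lemma eVec_gt (n k : ℕ) (h : n < k) : eVec n k = 0 := by
  funext t; simp only [eVec]
  have : (t : ℕ) + 1 ≠ k := by have := t.isLt; omega
  simp [this]

lemma mulVec_dVec_one (n : ℕ) (hn : 1 ≤ n) (A : Matrix (Fin n) (Fin n) ℝ)
    (hA : ∀ i j : Fin n, A i j = if (j : ℕ) ≤ (i : ℕ) then 1 else 0) :
    A.mulVec (dVec n 1) = -(fun _ => (1 : ℝ)) := by
  have : dVec n 1 = -(eVec n 1) := by
    simp [dVec, eVec_zero]
  rw [this, Matrix.mulVec_neg, mulVec_eVec n A hA 1 le_rfl hn]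
  funext t; simp

lemma mulVec_dVec (n : ℕ) (A : Matrix (Fin n) (Fin n) ℝ)
    (hA : ∀ i j : Fin n, A i j = if (j : ℕ) ≤ (i : ℕ) then 1 else 0)
    (i : ℕ) (h1 : 2 ≤ i) (h2 : i ≤ n + 1) :
    A.mulVec (dVec n i) = eVec n (i - 1) := by
  rcases eq_or_lt_of_le h2 with h | h
  · have : dVec n i = eVec n (i - 1) := by
      simp [dVec, h.symm ▸ (eVec_gt n i (by omega)), sub_eq_self]
      rw [h]; exact eVec_gt n (n+1) (by omega)
    rw [this, mulVec_eVec n A hA (i-1) (by omega) (by omega)]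
    funext t
    simp only [eVec]
    have := t.isLt
    by_cases ht : (t:ℕ) + 1 = i - 1 <;> simp [ht] <;> omega
  · have h2' : i ≤ n := by omega
    rw [dVec, Matrix.mulVec_sub, mulVec_eVec n A hA (i-1) (by omega) (by omega),
      mulVec_eVec n A hA i (by omega) h2']
    funext t
    simp only [Pi.sub_apply, eVec]
    split_ifs <;> norm_num <;> omega

theorem stmt0 (n : ℕ) (hn : 2 ≤ n)
    (A : Matrix (Fin n) (Fin n) ℝ)
    (hA : ∀ i j : Fin n, A i j = if (j : ℕ) ≤ (i : ℕ) then 1 else 0)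
    (V W : Set (Fin n → ℝ))
    (hV : V = {x | ∃ i ∈ Finset.Icc 1 (n + 1), x = dVec n i ∨ x = -dVec n i})
    (hW : W = {x | (∃ k ∈ Finset.Icc 1 n, x = eVec n k ∨ x = -eVec n k) ∨
                x = (fun _ => (1 : ℝ)) ∨ x = -(fun _ => (1 : ℝ))}) :
    A.det = 1 ∧ A.mulVec '' V = W ∧
      Set.BijOn A.mulVec (convexHull ℝ V) (convexHull ℝ W) := by
  have hdet : A.det = 1 := by
    rw [Matrix.det_of_lowerTriangular A ?_]
    · rw [Finset.prod_congr rfl (fun i _ => by rw [hA]; simp : ∀ i ∈ Finset.univ, A i i = 1), Finset.prod_const_one]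
    · intro i j hij
      rw [hA]
      simp only [OrderDual.toDual_lt_toDual] at hij
      have : ¬ ((j:ℕ) ≤ (i:ℕ)) := by exact_mod_cast not_le.mpr hij
      simp [this]
  have himg : A.mulVec '' V = W := by
    ext x
    constructor
    · rintro ⟨y, hy, rfl⟩
      rw [hV] at hy
      obtain ⟨i, hi, hy⟩ := hy
      simp only [Finset.mem_Icc] at hi
      rw [hW]
      rcases hy with rfl | rfl
      · rcases eq_or_lt_of_le hi.1 with h1 | h1
        · right; right; rw [← h1, mulVec_dVec_one n (by omega) A hA]
        · left; exact ⟨i - 1, Finset.mem_Icc.mpr ⟨by omega, by omega⟩,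
            Or.inl (mulVec_dVec n A hA i h1 hi.2)⟩
      · rw [Matrix.mulVec_neg]
        rcases eq_or_lt_of_le hi.1 with h1 | h1
        · right; left; rw [← h1, mulVec_dVec_one n (by omega) A hA, neg_neg]
        · left; exact ⟨i - 1, Finset.mem_Icc.mpr ⟨by omega, by omega⟩,
            Or.inr (by rw [mulVec_dVec n A hA i h1 hi.2])⟩
    · intro hx
      rw [hW] at hx
      rcases hx with ⟨k, hk, hx⟩ | hx | hx
      · simp only [Finset.mem_Icc] at hk
        rcases hx with rfl | rfl
        · refine ⟨dVec n (k+1), ?_, ?_⟩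
          · rw [hV]; exact ⟨k+1, Finset.mem_Icc.mpr ⟨by omega, by omega⟩, Or.inl rfl⟩
          · rw [mulVec_dVec n A hA (k+1) (by omega) (by omega)]; simp
        · refine ⟨-dVec n (k+1), ?_, ?_⟩
          · rw [hV]; exact ⟨k+1, Finset.mem_Icc.mpr ⟨by omega, by omega⟩, Or.inr rfl⟩
          · rw [Matrix.mulVec_neg, mulVec_dVec n A hA (k+1) (by omega) (by omega)]; simp
      · refine ⟨-dVec n 1, ?_, ?_⟩
        · rw [hV]; exact ⟨1, Finset.mem_Icc.mpr ⟨le_rfl, by omega⟩, Or.inr rfl⟩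
        · rw [Matrix.mulVec_neg, mulVec_dVec_one n (by omega) A hA, neg_neg, hx]
      · refine ⟨dVec n 1, ?_, ?_⟩
        · rw [hV]; exact ⟨1, Finset.mem_Icc.mpr ⟨le_rfl, by omega⟩, Or.inl rfl⟩
        · rw [mulVec_dVec_one n (by omega) A hA, hx]
  refine ⟨hdet, himg, ?_⟩
  have hinj : Function.Injective A.mulVec :=
    Matrix.mulVec_injective_iff_isUnit.mpr
      ((Matrix.isUnit_iff_isUnit_det A).mpr (by rw [hdet]; exact isUnit_one))
  have hconv : A.mulVec '' (convexHull ℝ V) = convexHull ℝ W := by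
    rw [show A.mulVec = ⇑(Matrix.mulVecLin A) from rfl, LinearMap.image_convexHull,
      Matrix.coe_mulVecLin, himg]
  exact ⟨fun x hx => hconv ▸ Set.mem_image_of_mem _ hx,
    fun x _ y _ h => hinj h,
    fun x hx => by rw [← hconv] at hx; exact hx⟩
end

section
/- Let N = n+1 be even with n ≥ 3, and let λ, λ' ∈ Λ_N. Then there exists an n×n integer matrix B such that either B or −B is a permutation matrix (in particular det B = ±1) and the image under x ↦ B x of the set {λ_1·(−(e_1 + ⋯ + e_n))} ∪ {λ_{i+1} e_i : 1 ≤ i ≤ n} equals the set {λ'_1·(−(e_1 + ⋯ + e_n))} ∪ {λ'_{i+1} e_i : 1 ≤ i ≤ n}; that is, any two facets F_λ, F_{λ'} of Q_N are unimodularly equivalent. -/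
/-!
Put `s = λ₁ λ'₁ ∈ {±1}`. The sequences `s λ₂, …, s λ_N` and `λ'₂, …, λ'_N` take values in `{±1}`
and both sum to `-λ'₁`, so they contain equally many `+1`s and differ by a permutation `σ`
of the coordinates. The matrix `s P_{σ⁻¹}` then sends `λ_{i+1} e_i` to `λ'_{σ(i)+1} e_{σ(i)}` and
the apex `-λ₁ (e₁ + ⋯ + e_n)` to `-λ'₁ (e₁ + ⋯ + e_n)`.
-/

open Finset

/-- Vertex set of the facet `F_λ` of `Q_N`:
`{λ_1 ⬝ (-(e_1 + ⋯ + e_n))} ∪ {λ_{i+1} e_i : 1 ≤ i ≤ n}`. -/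
noncomputable def facetVerts (n : ℕ) (l : ℕ → ℝ) : Set (Fin n → ℝ) :=
  insert (l 1 • ((fun _ => (-1 : ℝ)) : Fin n → ℝ))
    {x | ∃ i ∈ Finset.Icc 1 n, x = l (i + 1) • eVec n i}

theorem sum_Icc_one_succ {M : Type*} [AddCommMonoid M] (n : ℕ) (f : ℕ → M) :
    ∑ i ∈ Icc 1 (n + 1), f i = f 1 + ∑ i : Fin n, f (i + 2) := by
  rw [← Ico_add_one_right_eq_Icc, sum_Ico_eq_sum_range, Nat.add_sub_cancel, sum_range_succ',
    Fin.sum_univ_eq_sum_range (fun i => f (i + 2)), add_comm]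
  simp only [add_comm, add_left_comm]

theorem sum_eq_two_mul_card_sub_card {ι : Type*} [Fintype ι] {f : ι → ℝ}
    [DecidablePred (f · = 1)] (hf : ∀ i, f i = 1 ∨ f i = -1) :
    ∑ i, f i = 2 * #{i | f i = 1} - Fintype.card ι := by
  have hf' : ∀ i, f i = 2 * (if f i = 1 then 1 else 0) - 1 := fun i => by
    rcases hf i with h | h <;> norm_num [h]
  rw [sum_congr rfl fun i _ => hf' i, sum_sub_distrib, ← mul_sum, sum_boole]
  simp

theorem exists_perm_apply_eq_of_sum_eq {ι : Type*} [Fintype ι] {f g : ι → ℝ}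
    (hf : ∀ i, f i = 1 ∨ f i = -1) (hg : ∀ i, g i = 1 ∨ g i = -1)
    (h : ∑ i, f i = ∑ i, g i) : ∃ σ : Equiv.Perm ι, ∀ i, g (σ i) = f i := by
  classical
  have hcard : Fintype.card {i // f i = 1} = Fintype.card {i // g i = 1} := by
    rw [sum_eq_two_mul_card_sub_card hf, sum_eq_two_mul_card_sub_card hg] at h
    simp only [Fintype.card_subtype]
    exact_mod_cast (by linarith : (#{i | f i = 1} : ℝ) = #{i | g i = 1})
  let e := Fintype.equivOfCardEq hcard
  refine ⟨e.extendSubtype, fun i => ?_⟩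
  by_cases hi : f i = 1
  · rw [hi]; exact e.extendSubtype_mem i hi
  · rw [(hf i).resolve_left hi]; exact (hg _).resolve_left (e.extendSubtype_not_mem i hi)

theorem eVec_add_one (n : ℕ) (i : Fin n) : eVec n (i + 1) = Pi.single i 1 := by
  ext j
  simp [eVec, Pi.single_apply, Fin.ext_iff]

theorem facetVerts_eq_insert_range (n : ℕ) (l : ℕ → ℝ) :
    facetVerts n l =
      insert (l 1 • fun _ => -1) (Set.range fun i : Fin n => l (i + 2) • Pi.single i 1) := by
  refine congrArg _ (Set.ext fun x => ⟨?_, ?_⟩)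
  · rintro ⟨k, hk, rfl⟩
    obtain ⟨i, rfl⟩ : ∃ i : Fin n, (i : ℕ) + 1 = k := ⟨⟨k - 1, by grind⟩, by grind⟩
    exact ⟨i, by rw [eVec_add_one]⟩
  · rintro ⟨i, rfl⟩
    exact ⟨i + 1, by simp [mem_Icc], by rw [eVec_add_one]⟩

theorem smul_permMatrix_mulVec_image_facetVerts {n : ℕ} {l l' : ℕ → ℝ} {s : ℝ}
    {σ : Equiv.Perm (Fin n)} (h1 : s * l 1 = l' 1) (hσ : ∀ i, l' (σ i + 2) = s * l (i + 2)) :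
    (s • (σ⁻¹).permMatrix ℝ).mulVec '' facetVerts n l = facetVerts n l' := by
  have hM : ∀ v, (s • (σ⁻¹).permMatrix ℝ).mulVec v = s • (v ∘ ⇑σ⁻¹) := fun v => by
    rw [Matrix.smul_mulVec, Matrix.permMatrix_mulVec]
  have hcentre : s • ((l 1 • fun _ => -1) ∘ ⇑σ⁻¹) = l' 1 • fun _ : Fin n => (-1 : ℝ) := by
    ext; simp [← h1]
  have hvert : ∀ i : Fin n, s • ((l (i + 2) • Pi.single i 1) ∘ ⇑σ⁻¹)
      = l' (σ i + 2) • (Pi.single (σ i) 1 : Fin n → ℝ) := fun i => by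
    rw [Pi.smul_comp, Pi.single_comp_equiv, Equiv.Perm.inv_def, Equiv.symm_symm, hσ, smul_smul]
  rw [facetVerts_eq_insert_range, facetVerts_eq_insert_range, Set.image_insert_eq, hM, hcentre,
    ← Set.range_comp]
  refine congrArg _ ((congrArg Set.range (funext fun i => ?_)).trans (σ.surjective.range_comp _))
  exact (hM _).trans (hvert i)

theorem stmt1_general (n N : ℕ) (hN : N = n + 1)
    (l l' : ℕ → ℝ)
    (hl1 : ∀ i ∈ Finset.Icc 1 N, l i = 1 ∨ l i = -1)
    (hl2 : ∑ i ∈ Finset.Icc 1 N, l i = 0)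
    (hl1' : ∀ i ∈ Finset.Icc 1 N, l' i = 1 ∨ l' i = -1)
    (hl2' : ∑ i ∈ Finset.Icc 1 N, l' i = 0) :
    ∃ B : Matrix (Fin n) (Fin n) ℤ,
      (∃ σ : Equiv.Perm (Fin n), B = σ.permMatrix ℤ ∨ B = -(σ.permMatrix ℤ)) ∧
      (B.det = 1 ∨ B.det = -1) ∧
      (B.map (fun z : ℤ => (z : ℝ))).mulVec '' facetVerts n l = facetVerts n l' := by
  subst hN
  have hmem : ∀ i : Fin n, (i : ℕ) + 2 ∈ Icc 1 (n + 1) := fun i => by grind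
  obtain ⟨s, hs⟩ : ∃ s : ℤˣ, (s : ℝ) * l 1 = l' 1 := by
    rcases hl1 1 (by simp) with h | h <;> rcases hl1' 1 (by simp) with h' | h'
    exacts [⟨1, by simp [h, h']⟩, ⟨-1, by simp [h, h']⟩, ⟨-1, by simp [h, h']⟩,
      ⟨1, by simp [h, h']⟩]
  have hsl : ∀ i : Fin n, (s : ℝ) * l (i + 2) = 1 ∨ (s : ℝ) * l (i + 2) = -1 := fun i => by
    rcases Int.units_eq_one_or s with rfl | rfl <;> rcases hl1 _ (hmem i) with h | h <;> simp [h]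
  have hsum : ∑ i : Fin n, (s : ℝ) * l (i + 2) = ∑ i : Fin n, l' (i + 2) := by
    rw [sum_Icc_one_succ] at hl2 hl2'
    rw [← mul_sum]
    linear_combination (s : ℝ) * hl2 - hl2' - hs
  obtain ⟨σ, hσ⟩ := exists_perm_apply_eq_of_sum_eq hsl (fun i => hl1' _ (hmem i)) hsum
  refine ⟨(s : ℤ) • (σ⁻¹).permMatrix ℤ, ⟨σ⁻¹, ?_⟩, ?_, ?_⟩
  · rcases Int.units_eq_one_or s with rfl | rfl <;> simp
  · rw [Matrix.det_smul, Matrix.det_permutation, ← Int.isUnit_iff]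
    exact (s.isUnit.pow _).mul (Units.isUnit _)
  · rw [Matrix.map_smul' _ _ _ fun a b => Int.cast_mul a b,
      show ((σ⁻¹).permMatrix ℤ).map (Int.cast : ℤ → ℝ) = (σ⁻¹).permMatrix ℝ from
        PEquiv.map_toMatrix (Int.castRingHom ℝ) _]
    exact smul_permMatrix_mulVec_image_facetVerts hs hσ

theorem stmt1 (n N : ℕ) (hn : 3 ≤ n) (hN : N = n + 1) (hNe : Even N)
    (l l' : ℕ → ℝ)
    (hl1 : ∀ i ∈ Finset.Icc 1 N, l i = 1 ∨ l i = -1)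
    (hl2 : ∑ i ∈ Finset.Icc 1 N, l i = 0)
    (hl1' : ∀ i ∈ Finset.Icc 1 N, l' i = 1 ∨ l' i = -1)
    (hl2' : ∑ i ∈ Finset.Icc 1 N, l' i = 0) :
    ∃ B : Matrix (Fin n) (Fin n) ℤ,
      (∃ σ : Equiv.Perm (Fin n), B = σ.permMatrix ℤ ∨ B = -(σ.permMatrix ℤ)) ∧
      (B.det = 1 ∨ B.det = -1) ∧
      (B.map (fun z : ℤ => (z : ℝ))).mulVec '' facetVerts n l = facetVerts n l' :=
  stmt1_general n N hN l l' hl1 hl2 hl1' hl2'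
end

section
/- Let N = n+1 be even with n ≥ 3 and let λ ∈ Λ_N. Then the coefficients c_0 = 0 and c_i = λ_i (1 ≤ i ≤ N) give a nontrivial affine dependence among the points v_0(λ), …, v_N(λ): one has Σ_{i=1}^N λ_i · v_i(λ) = 0 and Σ_{i=1}^N λ_i = 0. Moreover, the points v_0(λ), v_1(λ), …, v_N(λ) affinely span ℝ^n. -/
open Finset

/-- `vPt n l i = λ_i (e_{i-1} - e_i)`. -/
noncomputable def vPt (n : ℕ) (l : ℕ → ℝ) (i : ℕ) : Fin n → ℝ := l i • dVec n i


lemma eVec_succ_self (n : ℕ) : eVec n (n + 1) = 0 := by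
  funext t
  simp [eVec, t.isLt.ne]

lemma pi_single_eq_eVec {n : ℕ} (i : Fin n) : Pi.single i (1 : ℝ) = eVec n (i + 1) := by
  funext t
  simp [eVec, Pi.single_apply, Fin.ext_iff]

lemma sum_Icc_dVec (n m : ℕ) : ∑ i ∈ Icc 1 m, dVec n i = -eVec n m := by
  induction m with
  | zero => simp [eVec_zero]
  | succ m ih =>
    rw [Finset.sum_Icc_succ_top (by omega), ih, dVec, Nat.add_sub_cancel]
    abel

lemma span_dVec_eq_top (n : ℕ) :
    Submodule.span ℝ (dVec n '' (Icc 1 n : Set ℕ)) = ⊤ := by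
  rw [eq_top_iff, ← (Pi.basisFun ℝ (Fin n)).span_eq, Submodule.span_le]
  rintro _ ⟨i, rfl⟩
  rw [Pi.basisFun_apply, pi_single_eq_eVec, ← neg_neg (eVec n _), ← sum_Icc_dVec]
  refine Submodule.neg_mem _ (Submodule.sum_mem _ fun j hj => Submodule.subset_span ⟨j, ?_, rfl⟩)
  simp only [coe_Icc, Set.mem_Icc, mem_Icc] at hj ⊢
  omega

lemma smul_vPt_self {n : ℕ} {l : ℕ → ℝ} {i : ℕ} (h : l i * l i = 1) :
    l i • vPt n l i = dVec n i := by
  rw [vPt, smul_smul, h, one_smul]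

theorem stmt2_general (n N : ℕ) (hN : N = n + 1)
    (l : ℕ → ℝ)
    (hl1 : ∀ i ∈ Finset.Icc 1 N, l i = 1 ∨ l i = -1)
    (hl2 : ∑ i ∈ Finset.Icc 1 N, l i = 0) :
    (∑ i ∈ Finset.Icc 1 N, l i • vPt n l i) = 0 ∧
    (∑ i ∈ Finset.Icc 1 N, l i) = 0 ∧
    affineSpan ℝ (insert (0 : Fin n → ℝ)
        {x | ∃ i ∈ Finset.Icc 1 N, x = vPt n l i}) = ⊤ := by
  have hdVec : ∀ i ∈ Icc 1 N, l i • vPt n l i = dVec n i := fun i hi =>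
    smul_vPt_self (mul_self_eq_one_iff.mpr (hl1 i hi))
  refine ⟨?_, hl2, ?_⟩
  · rw [Finset.sum_congr rfl hdVec, sum_Icc_dVec, hN, eVec_succ_self, neg_zero]
  · have hspan : Submodule.span ℝ {x | ∃ i ∈ Icc 1 N, x = vPt n l i} = ⊤ := by
      refine top_unique ((span_dVec_eq_top n).symm.le.trans (Submodule.span_le.mpr ?_))
      rintro _ ⟨i, hi, rfl⟩
      have hiN : i ∈ Icc 1 N := by simp only [coe_Icc, Set.mem_Icc, mem_Icc] at hi ⊢; omega
      rw [SetLike.mem_coe, ← hdVec i hiN]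
      exact Submodule.smul_mem _ _ (Submodule.subset_span ⟨i, hiN, rfl⟩)
    rw [← AffineSubspace.coe_eq_univ_iff, affineSpan_insert_zero, hspan, Submodule.top_coe]

theorem stmt2 (n N : ℕ) (hn : 3 ≤ n) (hN : N = n + 1) (hNe : Even N)
    (l : ℕ → ℝ)
    (hl1 : ∀ i ∈ Finset.Icc 1 N, l i = 1 ∨ l i = -1)
    (hl2 : ∑ i ∈ Finset.Icc 1 N, l i = 0) :
    (∑ i ∈ Finset.Icc 1 N, l i • vPt n l i) = 0 ∧
    (∑ i ∈ Finset.Icc 1 N, l i) = 0 ∧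
    affineSpan ℝ (insert (0 : Fin n → ℝ)
        {x | ∃ i ∈ Finset.Icc 1 N, x = vPt n l i}) = ⊤ :=
  stmt2_general n N hN l hl1 hl2
end

section
/- Let N = n+1 be even with n ≥ 3, and let λ ∈ Λ_N with λ_1 = 1. Define x ∈ ℝ^{n+1} by x_i = Σ_{j=1}^i λ_j for 1 ≤ i ≤ n and x_{n+1} = 1. Then ⟨x, (v_j(λ), ω(v_j(λ)))⟩ = 0 for every 2 ≤ j ≤ N, and ⟨x, (0, ω(0))⟩ = 0; that is, the lifted points (v_j(λ), ω(v_j(λ))) for j ≥ 2 together with the lifted origin all lie on the hyperplane through the origin with normal vector x. -/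
open Finset

/-- The lifting function for even `N`: `ω(0) = 0`, `ω(±e_1) = 2`, `ω(a) = 1` otherwise. -/
noncomputable def wEven (n : ℕ) (a : Fin n → ℝ) : ℝ :=
  if a = 0 then 0 else if a = eVec n 1 ∨ a = -eVec n 1 then 2 else 1

/-- The lift of a point `a ∈ ℝ^n` to `(a, ω(a)) ∈ ℝ^{n+1}`. -/
noncomputable def liftEven (n : ℕ) (a : Fin n → ℝ) : Fin (n + 1) → ℝ :=
  Fin.snoc a (wEven n a)

lemma sumE (n k : ℕ) (hk1 : 1 ≤ k) (hk2 : k ≤ n) (g : Fin n → ℝ) :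
    ∑ t, g t * eVec n k t = g ⟨k - 1, by omega⟩ := by
  rw [Finset.sum_eq_single (⟨k - 1, by omega⟩ : Fin n)]
  · simp [eVec, show k - 1 + 1 = k from by omega]
  · intro t _ ht
    have : (t : ℕ) + 1 ≠ k := by
      intro h
      apply ht
      apply Fin.ext
      simp; omega
    simp [eVec, this]
  · simp

lemma sumE0 (n k : ℕ) (hk : n < k) (g : Fin n → ℝ) :
    ∑ t, g t * eVec n k t = 0 := by
  apply Finset.sum_eq_zero
  intro t _
  have : (t : ℕ) + 1 ≠ k := by omega
  simp [eVec, this]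

lemma wEven_vPt (n j : ℕ) (hn : 3 ≤ n) (hj : 2 ≤ j) (hj2 : j ≤ n + 1)
    (l : ℕ → ℝ) (hlj : l j = 1 ∨ l j = -1) : wEven n (vPt n l j) = 1 := by
  have hl0 : l j ≠ 0 := by rcases hlj with h | h <;> rw [h] <;> norm_num
  rw [wEven, if_neg, if_neg]
  · rintro (h | h)
    all_goals {
      by_cases hj3 : j = 2
      · subst hj3
        have := congrFun h ⟨1, by omega⟩
        simp [vPt, dVec, eVec, Pi.smul_apply, smul_eq_mul] at this
        exact hl0 (by linarith)
      · have := congrFun h ⟨0, by omega⟩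
        simp [vPt, dVec, eVec, Pi.smul_apply, smul_eq_mul,
          show (1 : ℕ) ≠ j - 1 from by omega, show (1 : ℕ) ≠ j from by omega] at this
    }
  · intro h
    have := congrFun h ⟨j - 2, by omega⟩
    simp [vPt, dVec, eVec, Pi.smul_apply, smul_eq_mul,
      show j - 2 + 1 = j - 1 from by omega, show j - 2 + 1 ≠ j from by omega,
      show j - 1 ≠ j from by omega] at this
    exact hl0 this

theorem stmt3 (n N : ℕ) (hn : 3 ≤ n) (hN : N = n + 1) (hNe : Even N)
    (l : ℕ → ℝ)
    (hl1 : ∀ i ∈ Finset.Icc 1 N, l i = 1 ∨ l i = -1)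
    (hl2 : ∑ i ∈ Finset.Icc 1 N, l i = 0)
    (hlam1 : l 1 = 1)
    (x : Fin (n + 1) → ℝ)
    (hx : ∀ i : Fin (n + 1),
      x i = if (i : ℕ) < n then ∑ j ∈ Finset.Icc 1 ((i : ℕ) + 1), l j else 1) :
    (∀ j ∈ Finset.Icc 2 N, ∑ t, x t * liftEven n (vPt n l j) t = 0) ∧
    (∑ t, x t * liftEven n (0 : Fin n → ℝ) t = 0) := by
  subst hN
  constructor
  · intro j hj
    rw [Finset.mem_Icc] at hj
    obtain ⟨hj2, hjN⟩ := hj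
    have hlj : l j = 1 ∨ l j = -1 := hl1 j (by rw [Finset.mem_Icc]; omega)
    have hljsq : l j * l j = 1 := by rcases hlj with h | h <;> rw [h] <;> norm_num
    have hw : wEven n (vPt n l j) = 1 := wEven_vPt n j hn hj2 hjN l hlj
    rw [Fin.sum_univ_castSucc]
    have hlast : liftEven n (vPt n l j) (Fin.last n) = 1 := by
      rw [liftEven, Fin.snoc_last, hw]
    have hxlast : x (Fin.last n) = 1 := by rw [hx]; simp
    rw [hlast, hxlast]
    have hcast : ∀ t : Fin n, liftEven n (vPt n l j) t.castSucc = vPt n l j t := by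
      intro t; rw [liftEven, Fin.snoc_castSucc]
    simp only [hcast]
    have hsplit : ∑ t : Fin n, x t.castSucc * vPt n l j t
        = l j * ((∑ t, x t.castSucc * eVec n (j - 1) t) - ∑ t, x t.castSucc * eVec n j t) := by
      rw [mul_sub, Finset.mul_sum, Finset.mul_sum, ← Finset.sum_sub_distrib]
      apply Finset.sum_congr rfl
      intro t _
      simp [vPt, dVec, Pi.smul_apply, smul_eq_mul]
      ring
    rw [hsplit]
    have h1 : ∑ t : Fin n, x t.castSucc * eVec n (j - 1) t =
        ∑ k ∈ Finset.Icc 1 (j - 1), l k := by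
      rw [sumE n (j - 1) (by omega) (by omega)]
      rw [hx]
      simp [show j - 1 - 1 < n from by omega, show j - 1 - 1 + 1 = j - 1 from by omega]
    by_cases hjn : j ≤ n
    · have h2 : ∑ t : Fin n, x t.castSucc * eVec n j t = ∑ k ∈ Finset.Icc 1 j, l k := by
        rw [sumE n j (by omega) hjn, hx]
        simp [show j - 1 < n from by omega, show j - 1 + 1 = j from by omega]
      rw [h1, h2]
      have htel : ∑ k ∈ Finset.Icc 1 j, l k = (∑ k ∈ Finset.Icc 1 (j - 1), l k) + l j := by
        rw [show j = (j - 1) + 1 from by omega, Finset.sum_Icc_succ_top (by omega)]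
        simp
      rw [htel]; ring_nf; linarith
    · have hjeq : j = n + 1 := by omega
      have h2 : ∑ t : Fin n, x t.castSucc * eVec n j t = 0 := sumE0 n j (by omega) _
      rw [h1, h2, sub_zero]
      have : ∑ k ∈ Finset.Icc 1 (n + 1), l k = (∑ k ∈ Finset.Icc 1 n, l k) + l (n + 1) := by
        rw [Finset.sum_Icc_succ_top (by omega)]
      have hsum : ∑ k ∈ Finset.Icc 1 (j - 1), l k = -l j := by
        subst hjeq
        simp only [Nat.add_sub_cancel]
        linarith [this, hl2]
      rw [hsum]; nlinarith
  · apply Finset.sum_eq_zero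
    intro t _
    have : liftEven n (0 : Fin n → ℝ) t = 0 := by
      induction t using Fin.lastCases with
      | last => simp [liftEven, wEven]
      | cast t => simp [liftEven]
    rw [this, mul_zero]
end

section
/- Let N = n+1 be even with n ≥ 3, let λ ∈ Λ_N with λ_1 = 1, and let j ∈ {2, …, N} satisfy λ_j = 1. Define x ∈ ℝ^{n+1} by x_i = Σ_{k=1}^i λ_k for 1 ≤ i ≤ n and x_{n+1} = 1, and set y = x + Σ_{k=1}^{j−1} e_k (the e_k viewed in ℝ^{n+1} with last coordinate 0). Then ⟨y, (v_i(λ), ω(v_i(λ)))⟩ = 0 for every i ∈ {1, …, N} with i ≠ j, and ⟨y, (0, ω(0))⟩ = 0; that is, the hyperplane with normal y contains all lifted vertices of G^0_λ except (v_j(λ), ω(v_j(λ))). -/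
open Finset

lemma eVec_eq_zero (n k : ℕ) (h : k = 0 ∨ n < k) : eVec n k = 0 := by
  funext t
  have ht := t.isLt
  simp only [eVec, Pi.zero_apply, ite_eq_right_iff]
  intro h'; omega

lemma sum_mul_eVec (n : ℕ) (f : Fin n → ℝ) (k : ℕ) (h1 : 1 ≤ k) (h2 : k ≤ n) :
    ∑ t, f t * eVec n k t = f ⟨k - 1, by omega⟩ := by
  rw [Finset.sum_eq_single (⟨k - 1, by omega⟩ : Fin n)]
  · simp [eVec, Nat.sub_add_cancel h1]
  · intro b _ hb
    have hbk : (b : ℕ) + 1 ≠ k := by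
      intro h; apply hb; apply Fin.ext; show (b : ℕ) = k - 1; omega
    simp [eVec, hbk]
  · intro h; exact absurd (Finset.mem_univ _) h

lemma wEven_vPt_s4 (n : ℕ) (hn : 3 ≤ n) (l : ℕ → ℝ) (i : ℕ) (h2 : 2 ≤ i) (hi : i ≤ n + 1)
    (hli : l i = 1 ∨ l i = -1) : wEven n (vPt n l i) = 1 := by
  have hli0 : l i ≠ 0 := by rcases hli with h | h <;> rw [h] <;> norm_num
  have hval : ∀ m : ℕ, (hm : m < n) → vPt n l i ⟨m, hm⟩ =
      l i * ((if m + 1 = i - 1 then (1:ℝ) else 0) - (if m + 1 = i then 1 else 0)) := by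
    intro m hm
    simp [vPt, dVec, eVec]
  have hne0 : vPt n l i ≠ 0 := by
    intro h
    have := congrFun h ⟨i - 2, by omega⟩
    rw [hval (i - 2) (by omega)] at this
    rw [if_pos (by omega), if_neg (by omega)] at this
    simp at this
    exact hli0 this
  have hne1 : ¬(vPt n l i = eVec n 1 ∨ vPt n l i = -eVec n 1) := by
    intro h
    rcases Nat.lt_or_ge i (n + 1) with hilt | hige
    · -- i ≤ n, use index i - 1 where vPt = -l i but e1 = 0
      have h0 : ∀ g, vPt n l i = g → vPt n l i ⟨i - 1, by omega⟩ = g ⟨i - 1, by omega⟩ :=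
        fun g hg => congrFun hg _
      have hv : vPt n l i ⟨i - 1, by omega⟩ = -l i := by
        rw [hval (i - 1) (by omega), if_neg (by omega), if_pos (by omega)]; ring
      have he : eVec n 1 ⟨i - 1, by omega⟩ = 0 := by
        simp only [eVec]; rw [if_neg (by omega)]
      rcases h with h | h
      · have := congrFun h ⟨i - 1, by omega⟩
        rw [hv, he] at this
        exact hli0 (by linarith [neg_eq_zero.mp this])
      · have := congrFun h ⟨i - 1, by omega⟩
        rw [hv] at this
        simp only [Pi.neg_apply, he, neg_zero] at this
        exact hli0 (by linarith [neg_eq_zero.mp this])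
    · -- i = n + 1, use index n - 1
      have hieq : i = n + 1 := by omega
      have hv : vPt n l i ⟨n - 1, by omega⟩ = l i := by
        rw [hval (n - 1) (by omega), if_pos (by omega), if_neg (by omega)]; ring
      have he : eVec n 1 ⟨n - 1, by omega⟩ = 0 := by
        simp only [eVec]; rw [if_neg (by omega)]
      rcases h with h | h
      · have := congrFun h ⟨n - 1, by omega⟩
        rw [hv, he] at this; exact hli0 this
      · have := congrFun h ⟨n - 1, by omega⟩
        rw [hv] at this
        simp only [Pi.neg_apply, he, neg_zero] at this
        exact hli0 this
  simp [wEven, hne0, hne1]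

theorem stmt4 (n N : ℕ) (hn : 3 ≤ n) (hN : N = n + 1) (hNe : Even N)
    (l : ℕ → ℝ)
    (hl1 : ∀ i ∈ Finset.Icc 1 N, l i = 1 ∨ l i = -1)
    (hl2 : ∑ i ∈ Finset.Icc 1 N, l i = 0)
    (hlam1 : l 1 = 1)
    (j : ℕ) (hj : j ∈ Finset.Icc 2 N) (hlamj : l j = 1)
    (x y : Fin (n + 1) → ℝ)
    (hx : ∀ i : Fin (n + 1),
      x i = if (i : ℕ) < n then ∑ k ∈ Finset.Icc 1 ((i : ℕ) + 1), l k else 1)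
    (hy : y = x + Fin.snoc (∑ k ∈ Finset.Icc 1 (j - 1), eVec n k) 0) :
    (∀ i ∈ Finset.Icc 1 N, i ≠ j → ∑ t, y t * liftEven n (vPt n l i) t = 0) ∧
    (∑ t, y t * liftEven n (0 : Fin n → ℝ) t = 0) := by
  subst hN
  obtain ⟨hj1, hj2⟩ := Finset.mem_Icc.mp hj
  -- value of y on the first n coordinates
  have hy' : ∀ s : Fin n, y (Fin.castSucc s) =
      (∑ k ∈ Finset.Icc 1 ((s : ℕ) + 1), l k) + (if (s : ℕ) + 1 ≤ j - 1 then 1 else 0) := by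
    intro s
    rw [hy]
    simp only [Pi.add_apply, Fin.snoc_castSucc]
    rw [hx]
    have hs : ((Fin.castSucc s : Fin (n+1)) : ℕ) = (s : ℕ) := rfl
    rw [hs, if_pos s.isLt]
    congr 1
    rw [Finset.sum_apply]
    simp only [eVec]
    rw [Finset.sum_ite_eq (Finset.Icc 1 (j-1)) ((s:ℕ)+1) (fun _ => (1:ℝ))]
    simp only [Finset.mem_Icc]
    by_cases h : (s : ℕ) + 1 ≤ j - 1
    · rw [if_pos ⟨by omega, h⟩, if_pos h]
    · rw [if_neg (by omega), if_neg h]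
  have hylast : y (Fin.last n) = 1 := by
    rw [hy]
    simp only [Pi.add_apply, Fin.snoc_last]
    rw [hx]
    simp [Fin.val_last]
  -- generic decomposition of the inner product
  have hdec : ∀ a : Fin n → ℝ, ∑ t, y t * liftEven n a t =
      (∑ s : Fin n, y (Fin.castSucc s) * a s) + wEven n a := by
    intro a
    rw [Fin.sum_univ_castSucc]
    simp [liftEven, hylast]
  constructor
  · intro i hi hij
    obtain ⟨hi1, hi2⟩ := Finset.mem_Icc.mp hi
    have hli := hl1 i hi
    rw [hdec]
    have hexp : (∑ s : Fin n, y (Fin.castSucc s) * vPt n l i s) =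
        l i * ((∑ s : Fin n, y (Fin.castSucc s) * eVec n (i-1) s)
             - (∑ s : Fin n, y (Fin.castSucc s) * eVec n i s)) := by
      rw [mul_sub, Finset.mul_sum, Finset.mul_sum, ← Finset.sum_sub_distrib]
      refine Finset.sum_congr rfl fun s _ => ?_
      simp only [vPt, dVec, Pi.smul_apply, Pi.sub_apply, smul_eq_mul]
      ring
    rw [hexp]
    rcases Nat.lt_or_ge 1 i with hi2' | hi1'
    · -- 2 ≤ i
      rw [wEven_vPt_s4 n hn l i hi2' hi2 hli]
      have hA : (∑ s : Fin n, y (Fin.castSucc s) * eVec n (i-1) s) =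
          (∑ k ∈ Finset.Icc 1 (i-1), l k) + (if i - 1 ≤ j - 1 then 1 else 0) := by
        rw [sum_mul_eVec n _ (i-1) (by omega) (by omega), hy']
        simp only [Fin.val_mk]
        have he : i - 1 - 1 + 1 = i - 1 := by omega
        rw [he]
      rcases Nat.lt_or_ge i (n+1) with hile | hieq
      · -- 2 ≤ i ≤ n
        have hB : (∑ s : Fin n, y (Fin.castSucc s) * eVec n i s) =
            (∑ k ∈ Finset.Icc 1 i, l k) + (if i ≤ j - 1 then 1 else 0) := by
          rw [sum_mul_eVec n _ i (by omega) (by omega), hy']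
          simp only [Fin.val_mk]
          have he : i - 1 + 1 = i := by omega
          rw [he]
        rw [hA, hB]
        have hstep : (∑ k ∈ Finset.Icc 1 i, l k) =
            (∑ k ∈ Finset.Icc 1 (i-1), l k) + l i := by
          have : i = (i - 1) + 1 := by omega
          rw [this, Finset.sum_Icc_succ_top (by omega)]
          congr 2 <;> omega
        have hind : (if i - 1 ≤ j - 1 then (1:ℝ) else 0) = (if i ≤ j - 1 then 1 else 0) := by
          by_cases h : i ≤ j - 1
          · rw [if_pos (by omega), if_pos h]
          · rw [if_neg (by omega), if_neg h]
        rw [hstep, hind]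
        rcases hli with h | h <;> rw [h] <;> ring
      · -- i = n + 1
        have hieq' : i = n + 1 := by omega
        have hB : (∑ s : Fin n, y (Fin.castSucc s) * eVec n i s) = 0 := by
          rw [eVec_eq_zero n i (Or.inr (by omega))]
          simp
        have hA' : (∑ s : Fin n, y (Fin.castSucc s) * eVec n (i-1) s) = -l i := by
          rw [hA]
          have hsum : (∑ k ∈ Finset.Icc 1 (i-1), l k) + l i = 0 := by
            rw [← hl2]
            have : n + 1 = (i - 1) + 1 := by omega
            rw [this, Finset.sum_Icc_succ_top (by omega)]
            congr 2
            omega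
          rw [if_neg (by omega)]
          linarith
        rw [hA', hB]
        rcases hli with h | h <;> rw [h] <;> ring
    · -- i = 1
      have hieq : i = 1 := by omega
      subst hieq
      have hA : (∑ s : Fin n, y (Fin.castSucc s) * eVec n 0 s) = 0 := by
        rw [eVec_eq_zero n 0 (Or.inl rfl)]; simp
      have hB : (∑ s : Fin n, y (Fin.castSucc s) * eVec n 1 s) = 2 := by
        rw [sum_mul_eVec n _ 1 le_rfl (by omega), hy']
        simp only [Fin.val_mk]
        rw [if_pos (by omega : (1:ℕ) - 1 + 1 ≤ j - 1)]
        have he : (1:ℕ) - 1 + 1 = 1 := rfl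
        rw [he, Finset.Icc_self, Finset.sum_singleton, hlam1]
        norm_num
      have hv1 : vPt n l 1 = -eVec n 1 := by
        funext t
        simp [vPt, dVec, hlam1, eVec_eq_zero n 0 (Or.inl rfl)]
      have hw : wEven n (vPt n l 1) = 2 := by
        rw [hv1, wEven, if_neg, if_pos (Or.inr rfl)]
        intro h
        have := congrFun h ⟨0, by omega⟩
        simp [eVec] at this
      rw [hw, hA, hB, hlam1]
      ring
  · rw [hdec]
    have h0 : wEven n (0 : Fin n → ℝ) = 0 := by simp [wEven]
    rw [h0]
    simp
end

section
/- Let N = n+1 be even with n ≥ 3, and let λ ∈ Λ_N with λ_1 = 1. Define x' ∈ ℝ^n by x'_i = Σ_{j=1}^i λ_j. Then for every a ∈ S one has ⟨x', a⟩ + ω(a) ≥ 0, and equality holds if and only if a ∈ {0} ∪ {v_i(λ) : 2 ≤ i ≤ N}. In particular, the simplex conv({0} ∪ {v_i(λ) : 2 ≤ i ≤ N}) is the projection of a lower facet of the lifted point configuration {(a, ω(a)) : a ∈ S}. -/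
open Finset

/-- The point configuration `S = {0} ∪ {±(e_{i-1} - e_i) : 1 ≤ i ≤ N}`. -/
noncomputable def Sconf (n N : ℕ) : Set (Fin n → ℝ) :=
  insert 0 {x | ∃ i ∈ Finset.Icc 1 N, x = dVec n i ∨ x = -dVec n i}

/-- Standard inner product on `ℝ^n`. -/
noncomputable def dotR (n : ℕ) (x y : Fin n → ℝ) : ℝ := ∑ i, x i * y i


lemma dotR_zero (n : ℕ) (x : Fin n → ℝ) : dotR n x 0 = 0 := by simp [dotR]

lemma dotR_neg (n : ℕ) (x y : Fin n → ℝ) : dotR n x (-y) = -dotR n x y := by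
  simp [dotR, mul_neg, Finset.sum_neg_distrib]

lemma dotR_sub (n : ℕ) (x y z : Fin n → ℝ) : dotR n x (y - z) = dotR n x y - dotR n x z := by
  simp [dotR, mul_sub, Finset.sum_sub_distrib]

lemma dVec_apply (n i : ℕ) (t : Fin n) :
    dVec n i t = (if (t : ℕ) + 1 = i - 1 then 1 else 0) - (if (t : ℕ) + 1 = i then 1 else 0) :=
  rfl

lemma dVec_key (n i : ℕ) (hn : 3 ≤ n) (h2 : 2 ≤ i) (hi : i ≤ n + 1) :
    dVec n i ≠ 0 ∧ dVec n i ≠ eVec n 1 ∧ dVec n i ≠ -eVec n 1 := by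
  have ht : i - 2 < n := by omega
  have h1 : dVec n i ⟨i - 2, ht⟩ = 1 := by
    rw [dVec_apply, if_pos (by simp only [Fin.val_mk]; omega),
      if_neg (by simp only [Fin.val_mk]; omega)]
    norm_num
  refine ⟨?_, ?_, ?_⟩
  · intro h
    have := congrFun h ⟨i - 2, ht⟩
    rw [h1] at this
    simp at this
  · intro h
    rcases Nat.lt_or_ge i 3 with h3 | h3
    · have hi2 : i = 2 := by omega
      subst hi2
      have := congrFun h ⟨1, by omega⟩
      rw [dVec_apply, if_neg (by norm_num), if_pos (by norm_num)] at this
      simp [eVec] at this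
    · have := congrFun h ⟨i - 2, ht⟩
      rw [h1] at this
      simp only [eVec] at this
      rw [if_neg (by omega)] at this
      norm_num at this
  · intro h
    have := congrFun h ⟨i - 2, ht⟩
    rw [h1] at this
    simp only [Pi.neg_apply, eVec] at this
    split_ifs at this <;> norm_num at this

lemma wEven_dVec (n i : ℕ) (hn : 3 ≤ n) (h2 : 2 ≤ i) (hi : i ≤ n + 1) :
    wEven n (dVec n i) = 1 ∧ wEven n (-dVec n i) = 1 := by
  obtain ⟨a, b, c⟩ := dVec_key n i hn h2 hi
  constructor
  · rw [wEven, if_neg a, if_neg (by tauto)]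
  · rw [wEven, if_neg (by simpa using a), if_neg]
    push_neg
    constructor
    · intro h; exact c (by rw [← neg_neg (dVec n i), h])
    · intro h; exact b (by have := congrArg Neg.neg h; simpa using this)

theorem stmt5 (n N : ℕ) (hn : 3 ≤ n) (hN : N = n + 1) (hNe : Even N)
    (l : ℕ → ℝ)
    (hl1 : ∀ i ∈ Finset.Icc 1 N, l i = 1 ∨ l i = -1)
    (hl2 : ∑ i ∈ Finset.Icc 1 N, l i = 0)
    (hlam1 : l 1 = 1)
    (x' : Fin n → ℝ)
    (hx' : ∀ i : Fin n, x' i = ∑ j ∈ Finset.Icc 1 ((i : ℕ) + 1), l j) :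
    ∀ a ∈ Sconf n N,
      0 ≤ dotR n x' a + wEven n a ∧
      (dotR n x' a + wEven n a = 0 ↔
        a ∈ insert (0 : Fin n → ℝ) {x | ∃ i ∈ Finset.Icc 2 N, x = vPt n l i}) := by

  subst hN
  -- partial sums
  have hstep : ∀ m : ℕ, (∑ j ∈ Finset.Icc 1 (m + 1), l j) = (∑ j ∈ Finset.Icc 1 m, l j) + l (m + 1) := by
    intro m
    exact Finset.sum_Icc_succ_top (by omega) l
  have hE : ∀ m ≤ n + 1, dotR n x' (eVec n m) = ∑ j ∈ Finset.Icc 1 m, l j := by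
    intro m hm
    rcases Nat.eq_zero_or_pos m with h0 | h0
    · subst h0
      have he : eVec n 0 = 0 := funext fun t => by simp [eVec]
      simp [he, dotR]
    rcases Nat.lt_or_ge n m with hgt | hle
    · have hmN : m = n + 1 := by omega
      have he : eVec n m = 0 := funext fun t => by
        simp only [eVec, Pi.zero_apply]
        rw [if_neg (by omega)]
      rw [he, dotR_zero, hmN]
      exact hl2.symm
    · have hm' : m - 1 < n := by omega
      have hd : dotR n x' (eVec n m) = x' ⟨m - 1, hm'⟩ := by
        unfold dotR eVec
        rw [Finset.sum_eq_single (⟨m - 1, hm'⟩ : Fin n)]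
        · rw [if_pos (by simp; omega), mul_one]
        · intro b _ hb
          rw [if_neg, mul_zero]
          intro hc
          exact hb (Fin.ext (by simp; omega))
        · intro h
          exact absurd (Finset.mem_univ _) h
      have hc : ((⟨m - 1, hm'⟩ : Fin n) : ℕ) + 1 = m := by
        simp only [Fin.val_mk]; omega
      rw [hd, hx', hc]
  have key : ∀ k, 1 ≤ k → k ≤ n + 1 → dotR n x' (dVec n k) = -(l k) := by
    intro k h1 hk
    obtain ⟨m, rfl⟩ : ∃ m, k = m + 1 := ⟨k - 1, by omega⟩
    have : dVec n (m + 1) = eVec n m - eVec n (m + 1) := by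
      unfold dVec
      congr 1
    rw [this, dotR_sub, hE m (by omega), hE (m + 1) hk, hstep m]
    ring
  -- all points of the RHS set have value 0
  have hRHS0 : ∀ b ∈ insert (0 : Fin n → ℝ) {x | ∃ i ∈ Finset.Icc 2 (n + 1), x = vPt n l i},
      dotR n x' b + wEven n b = 0 := by
    intro b hb
    simp only [Set.mem_insert_iff, Set.mem_setOf_eq] at hb
    rcases hb with rfl | ⟨i, hi, rfl⟩
    · simp [dotR_zero, wEven]
    · simp only [Finset.mem_Icc] at hi
      have hki := key i (by omega) hi.2
      have hw := wEven_dVec n i hn hi.1 hi.2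
      rcases hl1 i (Finset.mem_Icc.mpr ⟨by omega, hi.2⟩) with h | h
      · have hv : vPt n l i = dVec n i := by simp [vPt, h]
        rw [hv, hki, hw.1, h]; ring
      · have hv : vPt n l i = -dVec n i := by simp [vPt, h]
        rw [hv, dotR_neg, hki, hw.2, h]; ring
  intro a ha
  simp only [Sconf, Set.mem_insert_iff, Set.mem_setOf_eq] at ha
  rcases ha with rfl | ⟨i, hi, hcase⟩
  · refine ⟨by simp [dotR_zero, wEven], ?_, fun _ => by simp [dotR_zero, wEven]⟩
    intro _
    exact Set.mem_insert _ _
  · simp only [Finset.mem_Icc] at hi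
    rcases Nat.lt_or_ge i 2 with h1 | h2
    · -- i = 1
      have hi1 : i = 1 := by omega
      subst hi1
      have hd1 : dVec n 1 = -eVec n 1 := by
        funext t; simp [dVec, eVec]
      have he1ne : eVec n 1 ≠ 0 := by
        intro h
        have := congrFun h ⟨0, by omega⟩
        simp [eVec] at this
      have hw1 : wEven n (eVec n 1) = 2 := by
        rw [wEven, if_neg he1ne, if_pos (Or.inl rfl)]
      have hw1' : wEven n (-eVec n 1) = 2 := by
        rw [wEven, if_neg (by simpa using he1ne), if_pos (Or.inr rfl)]
      have hk1 := key 1 le_rfl (by omega)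
      rcases hcase with rfl | rfl
      · have hv : dotR n x' (dVec n 1) + wEven n (dVec n 1) = 1 := by
          rw [hk1, hlam1]
          have : wEven n (dVec n 1) = 2 := by rw [hd1]; exact hw1'
          rw [this]; ring
        refine ⟨by rw [hv]; norm_num, ?_, fun hm => hRHS0 _ hm⟩
        intro h0
        rw [h0] at hv
        norm_num at hv
      · have hne1 : -dVec n 1 = eVec n 1 := by rw [hd1, neg_neg]
        have hv : dotR n x' (-dVec n 1) + wEven n (-dVec n 1) = 3 := by
          rw [dotR_neg, hk1, hlam1, hne1, hw1]
          ring
        refine ⟨by rw [hv]; norm_num, ?_, fun hm => hRHS0 _ hm⟩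
        intro h0
        rw [h0] at hv
        norm_num at hv
    · -- 2 ≤ i ≤ n + 1
      have hw := wEven_dVec n i hn h2 hi.2
      have hki := key i (by omega) hi.2
      have hl := hl1 i (Finset.mem_Icc.mpr ⟨by omega, hi.2⟩)
      rcases hcase with rfl | rfl
      · have hv : dotR n x' (dVec n i) + wEven n (dVec n i) = -(l i) + 1 := by
          rw [hki, hw.1]
        refine ⟨?_, ?_, fun hm => hRHS0 _ hm⟩
        · rw [hv]; rcases hl with h | h <;> rw [h] <;> norm_num
        · intro h0
          rw [hv] at h0
          have hli : l i = 1 := by linarith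
          refine Set.mem_insert_iff.mpr (Or.inr ?_)
          exact ⟨i, Finset.mem_Icc.mpr ⟨h2, hi.2⟩, by simp [vPt, hli]⟩
      · have hv : dotR n x' (-dVec n i) + wEven n (-dVec n i) = l i + 1 := by
          rw [dotR_neg, hki, hw.2]; ring
        refine ⟨?_, ?_, fun hm => hRHS0 _ hm⟩
        · rw [hv]; rcases hl with h | h <;> rw [h] <;> norm_num
        · intro h0
          rw [hv] at h0
          have hli : l i = -1 := by linarith
          refine Set.mem_insert_iff.mpr (Or.inr ?_)
          exact ⟨i, Finset.mem_Icc.mpr ⟨h2, hi.2⟩, by simp [vPt, hli]⟩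
end

section
/- Let N = n+1 be even with n ≥ 3, let λ ∈ Λ_N, and let m ∈ {1, …, N} be an index with λ_m = λ_1. Then the n×n real matrix whose columns are the n vectors v_i(λ) = λ_i(e_{i−1} − e_i), for i ∈ {1, …, N} with i ≠ m taken in increasing order of i, has determinant equal to 1 or −1. In particular, every simplex conv({0} ∪ {v_i(λ) : i ≠ m}) in the triangulation Δ_N is a unimodular simplex. -/
open Finset

/-- The `k`-th element (0-based, `k : Fin n`) of `{1, …, N} \ {m}` listed in increasing
order is `k+1` if `k+1 < m` and `k+2` otherwise. -/
def skipIdx (m : ℕ) (k : ℕ) : ℕ := if k + 1 < m then k + 1 else k + 2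

theorem stmt8 (n N : ℕ) (hn : 3 ≤ n) (hN : N = n + 1) (hNe : Even N)
    (l : ℕ → ℝ)
    (hl1 : ∀ i ∈ Finset.Icc 1 N, l i = 1 ∨ l i = -1)
    (hl2 : ∑ i ∈ Finset.Icc 1 N, l i = 0)
    (m : ℕ) (hm : m ∈ Finset.Icc 1 N) (hlm : l m = l 1) :
    (Matrix.of fun (r k : Fin n) => vPt n l (skipIdx m (k : ℕ)) r).det = 1 ∨
    (Matrix.of fun (r k : Fin n) => vPt n l (skipIdx m (k : ℕ)) r).det = -1 := by
  simp only [Finset.mem_Icc] at hm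
  set p : ℕ := m - 1 with hp
  have hpn : p ≤ n := by omega
  -- the reversing permutation on the first p indices
  have hwd : ∀ t : Fin n, (t : ℕ) < p → p - 1 - (t : ℕ) < n := by
    intro t ht; omega
  set f : Fin n → Fin n := fun t =>
    if h : (t : ℕ) < p then ⟨p - 1 - (t : ℕ), hwd t h⟩ else t with hf
  have hinv : Function.Involutive f := by
    intro t
    by_cases h : (t : ℕ) < p
    · have h2 : (p - 1 - (t : ℕ)) < p := by omega
      simp only [hf, dif_pos h]
      rw [dif_pos h2]
      ext
      simp only [Fin.val_mk]
      omega
    · simp only [hf, dif_neg h]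
  set σ : Equiv.Perm (Fin n) := hinv.toPerm with hσ
  set M : Matrix (Fin n) (Fin n) ℝ :=
    Matrix.of fun (r k : Fin n) => vPt n l (skipIdx m (k : ℕ)) r with hM
  -- entries of M
  have hent : ∀ r k : Fin n, M r k =
      l (skipIdx m k) * ((if (r : ℕ) + 1 = skipIdx m k - 1 then (1:ℝ) else 0)
        - (if (r : ℕ) + 1 = skipIdx m k then (1:ℝ) else 0)) := by
    intro r k
    simp [hM, vPt, dVec, eVec, mul_sub]
  have hdet : M.det = (M.submatrix σ σ).det := (Matrix.det_submatrix_equiv_self σ M).symm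
  -- σ as a ℕ-valued function
  have hσval : ∀ t : Fin n, ((σ t : Fin n) : ℕ) = if (t : ℕ) < p then p - 1 - (t : ℕ) else t := by
    intro t
    by_cases h : (t : ℕ) < p
    · simp [hσ, Function.Involutive.toPerm, hf, dif_pos h, h]
    · simp [hσ, Function.Involutive.toPerm, hf, dif_neg h, h]
  -- lower triangularity
  have htri : (M.submatrix σ σ).BlockTriangular OrderDual.toDual := by
    intro t s hts
    have hts' : (t : ℕ) < (s : ℕ) := hts
    simp only [Matrix.submatrix_apply]
    rw [hent]
    have h1 := hσval t
    have h2 := hσval s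
    set a : ℕ := ((σ t : Fin n) : ℕ)
    set b : ℕ := ((σ s : Fin n) : ℕ)
    clear_value a b
    have hz : ((if a + 1 = skipIdx m b - 1 then (1:ℝ) else 0)
        - (if a + 1 = skipIdx m b then (1:ℝ) else 0)) = 0 := by
      rcases Nat.lt_or_ge (t : ℕ) p with ht | ht
      · rw [if_pos ht] at h1
        rcases Nat.lt_or_ge (s : ℕ) p with hs | hs
        · rw [if_pos hs] at h2
          unfold skipIdx
          split_ifs <;> first | ring1 | (exfalso; omega)
        · rw [if_neg (by omega)] at h2
          unfold skipIdx
          split_ifs <;> first | ring1 | (exfalso; omega)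
      · rw [if_neg (by omega)] at h1
        rcases Nat.lt_or_ge (s : ℕ) p with hs | hs
        · exfalso; omega
        · rw [if_neg (by omega)] at h2
          unfold skipIdx
          split_ifs <;> first | ring1 | (exfalso; omega)
    rw [hz, mul_zero]
  have hdiag : ∀ t : Fin n, (M.submatrix σ σ) t t = 1 ∨ (M.submatrix σ σ) t t = -1 := by
    intro t
    simp only [Matrix.submatrix_apply]
    rw [hent]
    have h1 := hσval t
    set a : ℕ := ((σ t : Fin n) : ℕ)
    clear_value a
    by_cases ht : (t : ℕ) < p
    · rw [if_pos ht] at h1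
      have ha : a < p := by omega
      have hsk : skipIdx m a = a + 1 := by unfold skipIdx; rw [if_pos (by omega)]
      rw [hsk]
      have he : ((if a + 1 = a + 1 - 1 then (1:ℝ) else 0)
          - (if a + 1 = a + 1 then (1:ℝ) else 0)) = -1 := by
        rw [if_neg (by omega), if_pos rfl]; ring
      rw [he]
      rcases hl1 (a + 1) (Finset.mem_Icc.mpr (by omega)) with h | h <;> rw [h]
      · right; ring
      · left; ring
    · rw [if_neg ht] at h1
      have hsk : skipIdx m a = a + 2 := by unfold skipIdx; rw [if_neg (by omega)]
      rw [hsk]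
      have he : ((if a + 1 = a + 2 - 1 then (1:ℝ) else 0)
          - (if a + 1 = a + 2 then (1:ℝ) else 0)) = 1 := by
        rw [if_pos (by omega), if_neg (by omega)]; ring
      rw [he]
      have hb : a + 2 ≤ N := by have := t.isLt; omega
      rcases hl1 (a + 2) (Finset.mem_Icc.mpr (by omega)) with h | h <;> rw [h]
      · left; ring
      · right; ring
  rw [hdet, Matrix.det_of_lowerTriangular _ htri]
  exact Finset.prod_induction _ (fun x => x = 1 ∨ x = -1)
    (by rintro x y (rfl | rfl) (rfl | rfl) <;> simp)
    (Or.inl rfl) (fun t _ => hdiag t)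
end

section
/- Let N = n+1 be odd with n ≥ 2, and let λ ∈ Λ_{j,N}. Define x' ∈ ℝ^n by x'_k = Σ_{i=1}^k λ_i for 1 ≤ k ≤ n. Then for every a ∈ S one has ⟨x', a⟩ + ω(a) ≥ 0, and equality holds if and only if a ∈ {v_i(λ) : 1 ≤ i ≤ N} = {0} ∪ {λ_i(e_{i−1} − e_i) : i ≠ j}. In particular, (x'_1, …, x'_n, 1) is the upward-pointing inner normal vector of the lower facet of the lifted configuration {(a, ω(a)) : a ∈ S} whose projection is the simplex G^0_λ. -/
open Finset

/-- The lifting function for odd `N`: `ω(0) = 0` and `ω(a) = 1` for nonzero `a`. -/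
noncomputable def wOdd (n : ℕ) (a : Fin n → ℝ) : ℝ := if a = 0 then 0 else 1

lemma dotR_smul (n : ℕ) (c : ℝ) (x y : Fin n → ℝ) : dotR n x (c • y) = c * dotR n x y := by
  unfold dotR
  rw [Finset.mul_sum]
  refine Finset.sum_congr rfl fun t _ => ?_
  simp [Pi.smul_apply, smul_eq_mul]; ring

lemma dotR_eVec (n N : ℕ) (hN : N = n + 1) (l : ℕ → ℝ) (x' : Fin n → ℝ)
    (hx' : ∀ k : Fin n, x' k = ∑ i ∈ Finset.Icc 1 ((k : ℕ) + 1), l i)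
    (hl2 : ∑ i ∈ Finset.Icc 1 N, l i = 0)
    (k : ℕ) (hk : k ≤ N) :
    dotR n x' (eVec n k) = ∑ i ∈ Finset.Icc 1 k, l i := by
  rcases Nat.eq_zero_or_pos k with hk0 | hk1
  · subst hk0; simp [dotR, eVec]
  rcases Nat.lt_or_ge k (n + 1) with hkn | hkn
  · have hkn' : k - 1 < n := by omega
    have hdot : dotR n x' (eVec n k) = x' ⟨k - 1, hkn'⟩ := by
      unfold dotR eVec
      rw [Finset.sum_eq_single (⟨k - 1, hkn'⟩ : Fin n)]
      · have h : (k - 1) + 1 = k := by omega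
        simp [h]
      · intro b _ hb
        have h : ¬ ((b : ℕ) + 1 = k) := by
          intro h; apply hb; apply Fin.ext; simp; omega
        simp [h]
      · intro h; exact absurd (Finset.mem_univ _) h
    rw [hdot, hx']
    have : (k - 1) + 1 = k := by omega
    rw [this]
  · have hkN : k = N := by omega
    have hdot : dotR n x' (eVec n k) = 0 := by
      unfold dotR eVec
      apply Finset.sum_eq_zero
      intro t _
      have h : ¬ ((t : ℕ) + 1 = k) := by have := t.isLt; omega
      simp [h]
    rw [hdot, hkN, hl2]

lemma dotR_dVec (n N : ℕ) (hN : N = n + 1) (l : ℕ → ℝ) (x' : Fin n → ℝ)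
    (hx' : ∀ k : Fin n, x' k = ∑ i ∈ Finset.Icc 1 ((k : ℕ) + 1), l i)
    (hl2 : ∑ i ∈ Finset.Icc 1 N, l i = 0)
    (i : ℕ) (hi : i ∈ Finset.Icc 1 N) :
    dotR n x' (dVec n i) = -(l i) := by
  rw [Finset.mem_Icc] at hi
  have h1 : dotR n x' (eVec n (i - 1)) = ∑ i' ∈ Finset.Icc 1 (i - 1), l i' :=
    dotR_eVec n N hN l x' hx' hl2 (i - 1) (by omega)
  have h2 : dotR n x' (eVec n i) = ∑ i' ∈ Finset.Icc 1 i, l i' :=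
    dotR_eVec n N hN l x' hx' hl2 i (by omega)
  have h3 : ∑ i' ∈ Finset.Icc 1 i, l i' = (∑ i' ∈ Finset.Icc 1 (i - 1), l i') + l i := by
    have h : i = (i - 1) + 1 := by omega
    rw [h, Finset.sum_Icc_succ_top (by omega)]
    simp
  unfold dVec
  rw [dotR_sub, h1, h2, h3]
  ring

lemma dVec_ne_zero (n N : ℕ) (hn : 2 ≤ n) (hN : N = n + 1)
    (i : ℕ) (hi : i ∈ Finset.Icc 1 N) : dVec n i ≠ 0 := by
  rw [Finset.mem_Icc] at hi
  intro h
  rcases Nat.lt_or_ge i (n + 1) with hin | hin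
  · have ht : i - 1 < n := by omega
    have := congrFun h ⟨i - 1, ht⟩
    have h1 : ¬ ((i - 1 : ℕ) + 1 = i - 1) := by omega
    have h2 : (i - 1 : ℕ) + 1 = i := by omega
    have h3 : ¬ (i = i - 1) := by omega
    simp [dVec, eVec, h1, h2, h3] at this
  · have hiN : i = n + 1 := by omega
    have ht : n - 1 < n := by omega
    have := congrFun h ⟨n - 1, ht⟩
    have h1 : (n - 1 : ℕ) + 1 = i - 1 := by omega
    have h2 : ¬ ((n - 1 : ℕ) + 1 = i) := by omega
    have h3 : ¬ (i - 1 = i) := by omega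
    simp [dVec, eVec, h1, h2, h3] at this

lemma vPt_val (n N : ℕ) (hn : 2 ≤ n) (hN : N = n + 1)
    (j : ℕ) (l : ℕ → ℝ) (hlj : l j = 0)
    (hl1 : ∀ i ∈ Finset.Icc 1 N, i ≠ j → l i = 1 ∨ l i = -1)
    (hl2 : ∑ i ∈ Finset.Icc 1 N, l i = 0)
    (x' : Fin n → ℝ)
    (hx' : ∀ k : Fin n, x' k = ∑ i ∈ Finset.Icc 1 ((k : ℕ) + 1), l i)
    (i : ℕ) (hi : i ∈ Finset.Icc 1 N) :
    dotR n x' (vPt n l i) + wOdd n (vPt n l i) = 0 := by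
  by_cases h0 : l i = 0
  · have hz : vPt n l i = 0 := by simp [vPt, h0]
    rw [hz, dotR_zero]
    simp [wOdd]
  · have hnz : vPt n l i ≠ 0 :=
      smul_ne_zero h0 (dVec_ne_zero n N hn hN i hi)
    have hd : dotR n x' (vPt n l i) = l i * (-(l i)) := by
      unfold vPt
      rw [dotR_smul, dotR_dVec n N hN l x' hx' hl2 i hi]
    have hli : l i = 1 ∨ l i = -1 := by
      by_cases hij : i = j
      · exact absurd (hij ▸ hlj) h0
      · exact hl1 i hi hij
    rw [hd]
    simp [wOdd, hnz]
    rcases hli with h | h <;> rw [h] <;> ring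

theorem stmt10 (n N : ℕ) (hn : 2 ≤ n) (hN : N = n + 1) (hNo : Odd N)
    (j : ℕ) (hj : j ∈ Finset.Icc 1 N)
    (l : ℕ → ℝ) (hlj : l j = 0)
    (hl1 : ∀ i ∈ Finset.Icc 1 N, i ≠ j → l i = 1 ∨ l i = -1)
    (hl2 : ∑ i ∈ Finset.Icc 1 N, l i = 0)
    (x' : Fin n → ℝ)
    (hx' : ∀ k : Fin n, x' k = ∑ i ∈ Finset.Icc 1 ((k : ℕ) + 1), l i) :
    ∀ a ∈ Sconf n N,
      0 ≤ dotR n x' a + wOdd n a ∧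
      (dotR n x' a + wOdd n a = 0 ↔ a ∈ {x | ∃ i ∈ Finset.Icc 1 N, x = vPt n l i}) := by
  intro a ha
  have hback : a ∈ {x | ∃ i ∈ Finset.Icc 1 N, x = vPt n l i} →
      dotR n x' a + wOdd n a = 0 := by
    rintro ⟨i, hi, rfl⟩
    exact vPt_val n N hn hN j l hlj hl1 hl2 x' hx' i hi
  rcases ha with rfl | ⟨i, hi, hcase⟩
  · constructor
    · rw [dotR_zero]; simp [wOdd]
    · constructor
      · intro _
        exact ⟨j, hj, by simp [vPt, hlj]⟩
      · exact hback
  · have hdnz := dVec_ne_zero n N hn hN i hi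
    have hdot := dotR_dVec n N hN l x' hx' hl2 i hi
    have hli : l i = 0 ∨ l i = 1 ∨ l i = -1 := by
      by_cases hij : i = j
      · left; rw [hij]; exact hlj
      · right; exact hl1 i hi hij
    rcases hcase with rfl | rfl
    · rw [hdot]
      have hw : wOdd n (dVec n i) = 1 := by simp [wOdd, hdnz]
      rw [hw]
      constructor
      · rcases hli with h | h | h <;> rw [h] <;> norm_num
      · constructor
        · intro heq
          have h1 : l i = 1 := by linarith
          exact ⟨i, hi, by simp [vPt, h1]⟩
        · intro hm
          have := hback hm
          rw [hdot, hw] at this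
          exact this
    · rw [dotR_neg, hdot]
      have hnnz : -dVec n i ≠ 0 := by simpa using hdnz
      have hw : wOdd n (-dVec n i) = 1 := by simp [wOdd, hnnz]
      rw [hw]
      constructor
      · rcases hli with h | h | h <;> rw [h] <;> norm_num
      · constructor
        · intro heq
          have h1 : l i = -1 := by linarith
          refine ⟨i, hi, ?_⟩
          rw [vPt, h1]
          ext t; simp
        · intro hm
          have := hback hm
          rw [dotR_neg, hdot, hw] at this
          exact this
end

section
/- Let N = n+1 be odd with n ≥ 2. Then the adjacency polytope is covered by the simplices of Δ_N: conv(S) = ⋃_{λ ∈ Λ_N} conv({v_i(λ) : 1 ≤ i ≤ N}). That is, every point of the convex hull of S lies in G^0_λ for some λ ∈ Λ_N. -/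
open Finset

/-- The index set `Λ_N` for odd `N`, as functions `ℕ → ℝ` supported on `{1, …, N}`
with exactly one zero coordinate, remaining coordinates `±1`, and coordinate sum `0`. -/
def LambdaOdd (N : ℕ) : Set (ℕ → ℝ) :=
  {l | ∃ j ∈ Finset.Icc 1 N, l j = 0 ∧
        (∀ i ∈ Finset.Icc 1 N, i ≠ j → l i = 1 ∨ l i = -1) ∧
        (∑ i ∈ Finset.Icc 1 N, l i) = 0}

/-! A point of `conv S` is `∑ cᵢ dᵢ` with `∑ |cᵢ| ≤ 1`, where `dᵢ = e_{i-1} - e_i`.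
Since `∑ dᵢ = 0`, shifting every coefficient by the same `m` does not move the point. Take
`m = c_j` a median of the odd number of coefficients and `λᵢ = sign (cᵢ - m)`, with ties split so
that there are as many `+1` as `-1` and `λ_j = 0`; then `λ ∈ Λ_N` and
`∑ |cᵢ - m| = ∑ λᵢ cᵢ ≤ ∑ |cᵢ| ≤ 1`. So the point is `∑ |cᵢ - m| • λᵢ dᵢ`, a combination of the
vertices of `G⁰_λ` of total weight at most `1`, and the missing weight goes to the vertex
`v_j(λ) = 0`. -/

section Signings

variable {ι : Type*}

def balancedSigns (s : Finset ι) : Set (ι → ℝ) :=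
  {σ | ∃ j ∈ s, σ j = 0 ∧ (∀ i ∈ s, i ≠ j → σ i = 1 ∨ σ i = -1) ∧ ∑ i ∈ s, σ i = 0}

theorem exists_median_signing [DecidableEq ι] (c : ι → ℝ) {k : ℕ} {s : Finset ι}
    (hs : #s = 2 * k + 1) :
    ∃ j ∈ s, ∃ σ : ι → ℝ, σ j = 0 ∧ (∀ i ∈ s, i ≠ j → σ i = 1 ∨ σ i = -1) ∧
      ∑ i ∈ s, σ i = 0 ∧ ∀ i ∈ s, σ i * (c i - c j) = |c i - c j| := by
  induction k generalizing s with
  | zero =>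
    obtain ⟨j, rfl⟩ := card_eq_one.1 hs
    exact ⟨j, mem_singleton_self j, 0, rfl, by simp, by simp, by simp⟩
  | succ k ih =>
    -- a maximum `a` and a minimum `b` of the rest lie on opposite sides of any median of the others
    obtain ⟨a, ha, hmax⟩ := s.exists_max_image c (card_pos.1 (by omega))
    obtain ⟨b, hb, hmin⟩ :=
      (s.erase a).exists_min_image c (card_pos.1 (by rw [card_erase_of_mem ha]; omega))
    obtain ⟨j, hj, σ, hσj, hpm, hsum, hmed⟩ := ih (s := (s.erase a).erase b)
      (by rw [card_erase_of_mem hb, card_erase_of_mem ha]; omega)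
    have hba : b ≠ a := ne_of_mem_erase hb
    have hjb : j ≠ b := ne_of_mem_erase hj
    have hja : j ≠ a := ne_of_mem_erase (mem_of_mem_erase hj)
    have hjs : j ∈ s := mem_of_mem_erase (mem_of_mem_erase hj)
    refine ⟨j, hjs, fun i => if i = a then 1 else if i = b then -1 else σ i,
      by simp [hja, hjb, hσj], ?_, ?_, ?_⟩
    · intro i hi hij
      by_cases hia : i = a
      · simp [hia]
      by_cases hib : i = b
      · simp [hib, hba]
      simpa [hia, hib] using hpm i (mem_erase.2 ⟨hib, mem_erase.2 ⟨hia, hi⟩⟩) hij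
    · have hrest : ∑ i ∈ (s.erase a).erase b, (if i = a then 1 else if i = b then -1 else σ i) =
          ∑ i ∈ (s.erase a).erase b, σ i := sum_congr rfl fun i hi => by
        rw [if_neg (ne_of_mem_erase (mem_of_mem_erase hi)), if_neg (ne_of_mem_erase hi)]
      rw [← add_sum_erase s _ ha, ← add_sum_erase _ _ hb, hrest, hsum]
      simp [hba]
    · intro i hi
      by_cases hia : i = a
      · simp [hia, abs_of_nonneg (sub_nonneg.2 (hmax j hjs))]
      by_cases hib : i = b
      · simp [hib, hba, abs_of_nonpos (sub_nonpos.2 (hmin j (mem_of_mem_erase hj)))]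
      simpa [hia, hib] using hmed i (mem_erase.2 ⟨hib, mem_erase.2 ⟨hia, hi⟩⟩)

theorem sum_abs_sub_le_sum_abs_of_signing {s : Finset ι} {σ c : ι → ℝ} {m : ℝ}
    (hσ : ∀ i ∈ s, |σ i| ≤ 1) (hsum : ∑ i ∈ s, σ i = 0)
    (hmed : ∀ i ∈ s, σ i * (c i - m) = |c i - m|) :
    ∑ i ∈ s, |c i - m| ≤ ∑ i ∈ s, |c i| :=
  calc ∑ i ∈ s, |c i - m| = ∑ i ∈ s, σ i * c i := by
        rw [← sum_congr rfl hmed]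
        simp only [mul_sub, sum_sub_distrib, ← sum_mul, hsum, zero_mul, sub_zero]
    _ ≤ ∑ i ∈ s, |c i| := sum_le_sum fun i hi =>
        (le_abs_self _).trans <| by
          rw [abs_mul]; exact mul_le_of_le_one_left (abs_nonneg _) (hσ i hi)

end Signings

section Convex

variable {ι E : Type*} [AddCommGroup E] [Module ℝ E]

theorem Convex.sum_mem_of_sum_le_one {K : Set E} (hK : Convex ℝ K) (h0 : (0 : E) ∈ K)
    {t : Finset ι} {w : ι → ℝ} {z : ι → E} (hw₀ : ∀ i ∈ t, 0 ≤ w i) (hw₁ : ∑ i ∈ t, w i ≤ 1)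
    (hz : ∀ i ∈ t, z i ∈ K) : ∑ i ∈ t, w i • z i ∈ K := by
  rcases (sum_nonneg hw₀).eq_or_lt with hW | hW
  · rw [sum_eq_zero fun i hi => by rw [(sum_eq_zero_iff_of_nonneg hw₀).1 hW.symm i hi, zero_smul]]
    exact h0
  · convert hK.smul_mem_of_zero_mem h0 (hK.centerMass_mem hw₀ hW hz) ⟨hW.le, hw₁⟩ using 1
    rw [centerMass, smul_smul, mul_inv_cancel₀ hW.ne', one_smul]

def absConvexCombinations (s : Finset ι) (v : ι → E) : Set E :=
  {x | ∃ c : ι → ℝ, ∑ i ∈ s, |c i| ≤ 1 ∧ x = ∑ i ∈ s, c i • v i}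

theorem convex_absConvexCombinations (s : Finset ι) (v : ι → E) :
    Convex ℝ (absConvexCombinations s v) := by
  rintro _ ⟨c, hc, rfl⟩ _ ⟨d, hd, rfl⟩ a b ha hb hab
  refine ⟨fun i => a * c i + b * d i, ?_, ?_⟩
  · calc ∑ i ∈ s, |a * c i + b * d i| ≤ ∑ i ∈ s, (a * |c i| + b * |d i|) :=
          sum_le_sum fun i _ => (abs_add_le _ _).trans_eq <| by
            rw [abs_mul, abs_mul, abs_of_nonneg ha, abs_of_nonneg hb]
      _ = a * ∑ i ∈ s, |c i| + b * ∑ i ∈ s, |d i| := by rw [sum_add_distrib, mul_sum, mul_sum]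
      _ ≤ a * 1 + b * 1 := by gcongr
      _ = 1 := by rw [mul_one, mul_one, hab]
  · simp only [smul_sum, smul_smul, ← sum_add_distrib, add_smul]

theorem convexHull_insert_zero_subset_absConvexCombinations [DecidableEq ι] (s : Finset ι)
    (v : ι → E) :
    convexHull ℝ (insert 0 {x | ∃ i ∈ s, x = v i ∨ x = -v i}) ⊆ absConvexCombinations s v := by
  refine convexHull_min (Set.insert_subset_iff.2 ⟨⟨0, by simp, by simp⟩, ?_⟩)
    (convex_absConvexCombinations s v)
  rintro _ ⟨i, hi, rfl | rfl⟩
  · exact ⟨Pi.single i 1, by simp [Pi.single_apply, apply_ite, hi],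
      by simp [Pi.single_apply, hi]⟩
  · exact ⟨Pi.single i (-1), by simp [Pi.single_apply, apply_ite, hi],
      by simp [Pi.single_apply, hi]⟩

theorem sum_smul_mem_iUnion_convexHull_balancedSigns [DecidableEq ι] {s : Finset ι} {k : ℕ}
    (hs : #s = 2 * k + 1) {v : ι → E} (hv : ∑ i ∈ s, v i = 0) {c : ι → ℝ}
    (hc : ∑ i ∈ s, |c i| ≤ 1) :
    ∑ i ∈ s, c i • v i ∈ ⋃ σ ∈ balancedSigns s, convexHull ℝ {x | ∃ i ∈ s, x = σ i • v i} := by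
  obtain ⟨j, hj, σ, hσj, hpm, hsum, hmed⟩ := exists_median_signing c hs
  have hσ : ∀ i ∈ s, |σ i| ≤ 1 := fun i hi => by
    rcases eq_or_ne i j with rfl | hij
    · simp [hσj]
    · rcases hpm i hi hij with h | h <;> simp [h]
  have hrepr : ∀ i ∈ s, |c i - c j| * σ i = c i - c j := fun i hi => by
    rcases eq_or_ne i j with rfl | hij
    · simp
    · rw [← hmed i hi]
      rcases hpm i hi hij with h | h <;> rw [h] <;> ring
  have hx : ∑ i ∈ s, c i • v i = ∑ i ∈ s, |c i - c j| • σ i • v i :=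
    calc ∑ i ∈ s, c i • v i = ∑ i ∈ s, (c i - c j) • v i := by
          simp only [sub_smul, sum_sub_distrib, ← smul_sum, hv, smul_zero, sub_zero]
      _ = _ := sum_congr rfl fun i hi => by rw [smul_smul, hrepr i hi]
  have hvert : ∀ i ∈ s, σ i • v i ∈ convexHull ℝ {x | ∃ i ∈ s, x = σ i • v i} :=
    fun i hi => subset_convexHull ℝ _ ⟨i, hi, rfl⟩
  refine Set.mem_iUnion₂.2 ⟨σ, ⟨j, hj, hσj, hpm, hsum⟩, ?_⟩
  rw [hx]
  exact (convex_convexHull ℝ _).sum_mem_of_sum_le_one (by simpa [hσj] using hvert j hj)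
    (fun i _ => abs_nonneg _) ((sum_abs_sub_le_sum_abs_of_signing hσ hsum hmed).trans hc) hvert

theorem convexHull_insert_zero_eq_iUnion_balancedSigns {s : Finset ι} (hs : Odd #s) {v : ι → E}
    (hv : ∑ i ∈ s, v i = 0) :
    convexHull ℝ (insert 0 {x | ∃ i ∈ s, x = v i ∨ x = -v i}) =
      ⋃ σ ∈ balancedSigns s, convexHull ℝ {x | ∃ i ∈ s, x = σ i • v i} := by
  classical
  obtain ⟨k, hk⟩ := hs
  refine Set.Subset.antisymm (fun x hx => ?_) ?_
  · obtain ⟨c, hc, rfl⟩ := convexHull_insert_zero_subset_absConvexCombinations s v hx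
    exact sum_smul_mem_iUnion_convexHull_balancedSigns hk hv hc
  · refine Set.iUnion₂_subset fun σ hσ => convexHull_mono ?_
    obtain ⟨j, -, hσj, hpm, -⟩ := hσ
    rintro _ ⟨i, hi, rfl⟩
    rcases eq_or_ne i j with rfl | hij
    · simp [hσj]
    · rcases hpm i hi hij with h | h
      · exact Or.inr ⟨i, hi, Or.inl (by rw [h, one_smul])⟩
      · exact Or.inr ⟨i, hi, Or.inr (by rw [h, neg_one_smul])⟩

end Convex

theorem sum_dVec (n : ℕ) : ∑ i ∈ Icc 1 (n + 1), dVec n i = 0 := by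
  have hshift : ∀ k, dVec n (1 + k) = eVec n k - eVec n (k + 1) := fun k => by
    rw [dVec, add_tsub_cancel_left, add_comm]
  rw [← Ico_add_one_right_eq_Icc, sum_Ico_eq_sum_range, Nat.add_sub_cancel]
  simp only [hshift, sum_range_sub']
  funext t
  simp [eVec, t.isLt.ne]

theorem stmt11_general (n N : ℕ) (hN : N = n + 1) (hNo : Odd N) :
    convexHull ℝ (Sconf n N) =
      ⋃ l ∈ LambdaOdd N,
        convexHull ℝ {x | ∃ i ∈ Finset.Icc 1 N, x = vPt n l i} := by
  subst hN
  exact convexHull_insert_zero_eq_iUnion_balancedSigns (by rwa [Nat.card_Icc, Nat.add_sub_cancel])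
    (sum_dVec n)

theorem stmt11 (n N : ℕ) (hn : 2 ≤ n) (hN : N = n + 1) (hNo : Odd N) :
    convexHull ℝ (Sconf n N) =
      ⋃ l ∈ LambdaOdd N,
        convexHull ℝ {x | ∃ i ∈ Finset.Icc 1 N, x = vPt n l i} :=
  stmt11_general n N hN hNo
end

section
/- Let N ≥ 4 be even. Then the number of simplices in the triangulation Δ_N equals the adjacency polytope bound: Σ_{λ ∈ Λ_N} #{m ∈ {1,…,N} : λ_m = λ_1} = N · C(N−1, N/2 − 1) = N · C(N−1, ⌊(N−1)/2⌋). Moreover #Λ_N = C(N, N/2) and for each λ ∈ Λ_N one has #{m : λ_m = λ_1} = N/2. -/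
open Finset

private lemma sum_eq_aux (N : ℕ) (l : Fin N → ℤ) (h : ∀ i, l i = -1 ∨ l i = 1) :
    (∑ i, l i) = 2 * ((univ.filter fun i => l i = 1).card : ℤ) - N := by
  classical
  rw [← Finset.sum_filter_add_sum_filter_not univ (fun i => l i = 1)]
  have h1 : ∑ i ∈ univ.filter (fun i => l i = 1), l i
      = ((univ.filter fun i => l i = 1).card : ℤ) := by
    rw [Finset.sum_congr rfl (fun i hi => (mem_filter.mp hi).2)]
    simp
  have h2 : ∑ i ∈ univ.filter (fun i => ¬ l i = 1), l i
      = -(((univ.filter fun i => ¬ l i = 1).card : ℤ)) := by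
    have hv : ∀ i ∈ univ.filter (fun i => ¬ l i = 1), l i = -1 := fun i hi =>
      (h i).resolve_right (mem_filter.mp hi).2
    rw [Finset.sum_congr rfl hv, Finset.sum_const]
    simp
  have h3 : (univ.filter fun i => ¬ l i = 1).card
      = N - (univ.filter fun i => l i = 1).card := by
    rw [Finset.filter_not, Finset.card_sdiff_of_subset (filter_subset _ _)]
    simp
  have h4 : (univ.filter fun i => l i = 1).card ≤ N :=
    le_trans (card_filter_le _ _) (by simp)
  rw [h1, h2, h3, Nat.cast_sub h4]
  ring

theorem stmt15 (N : ℕ) (hN : 4 ≤ N) (hNe : Even N)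
    (Λ : Finset (Fin N → ℤ))
    (hΛ : Λ = (Fintype.piFinset fun _ : Fin N => ({-1, 1} : Finset ℤ)).filter
        (fun l => (∑ i, l i) = 0)) :
    (∑ l ∈ Λ, (Finset.univ.filter fun m => l m = l ⟨0, by omega⟩).card) =
        N * Nat.choose (N - 1) (N / 2 - 1) ∧
    N * Nat.choose (N - 1) (N / 2 - 1) = N * Nat.choose (N - 1) ((N - 1) / 2) ∧
    Λ.card = Nat.choose N (N / 2) ∧
    (∀ l ∈ Λ, (Finset.univ.filter fun m => l m = l ⟨0, by omega⟩).card = N / 2) := by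
  classical
  obtain ⟨k, hk⟩ := hNe
  have hmem : ∀ l ∈ Λ, (∀ i, l i = -1 ∨ l i = 1) ∧ (∑ i, l i) = 0 := by
    intro l hl
    rw [hΛ, mem_filter, Fintype.mem_piFinset] at hl
    refine ⟨fun i => ?_, hl.2⟩
    have := hl.1 i
    simp at this
    tauto
  -- each l ∈ Λ has exactly N/2 ones
  have hones : ∀ l ∈ Λ, (univ.filter fun i => l i = 1).card = N / 2 := by
    intro l hl
    obtain ⟨hv, hs⟩ := hmem l hl
    have := sum_eq_aux N l hv
    rw [hs] at this
    omega
  -- the per-λ count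
  have hcount : ∀ l ∈ Λ,
      (Finset.univ.filter fun m => l m = l ⟨0, by omega⟩).card = N / 2 := by
    intro l hl
    obtain ⟨hv, _⟩ := hmem l hl
    have h1 := hones l hl
    rcases hv ⟨0, by omega⟩ with h0 | h0
    · have : (Finset.univ.filter fun m => l m = l ⟨0, by omega⟩)
          = univ.filter fun i => ¬ l i = 1 := by
        apply filter_congr
        intro i _
        rw [h0]
        rcases hv i with h' | h' <;> simp [h']
      rw [this, Finset.filter_not, Finset.card_sdiff_of_subset (filter_subset _ _)]
      simp [h1]
      omega
    · have : (Finset.univ.filter fun m => l m = l ⟨0, by omega⟩)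
          = univ.filter fun i => l i = 1 := by
        apply filter_congr
        intro i _
        rw [h0]
      rw [this, h1]
  -- cardinality of Λ
  have hcard : Λ.card = Nat.choose N (N / 2) := by
    have hpc : ((univ : Finset (Fin N)).powersetCard (N / 2)).card
        = Nat.choose N (N / 2) := by
      simp [Finset.card_powersetCard]
    rw [← hpc]
    refine Finset.card_bij' (fun l _ => univ.filter fun i => l i = 1)
      (fun s _ => fun i => if i ∈ s then (1 : ℤ) else -1) ?hi ?hj ?li ?ri
    case hi =>
      intro l hl
      rw [Finset.mem_powersetCard]
      exact ⟨filter_subset _ _, hones l hl⟩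
    case hj =>
      intro s hs
      rw [Finset.mem_powersetCard] at hs
      rw [hΛ, mem_filter, Fintype.mem_piFinset]
      constructor
      · intro i; by_cases h : i ∈ s <;> simp [h]
      · have hsum : (∑ i : Fin N, if i ∈ s then (1 : ℤ) else -1)
            = 2 * (s.card : ℤ) - N := by
          have hv : ∀ i : Fin N, (if i ∈ s then (1 : ℤ) else -1) = -1 ∨
              (if i ∈ s then (1 : ℤ) else -1) = 1 := by
            intro i; by_cases h : i ∈ s <;> simp [h]
          have := sum_eq_aux N (fun i => if i ∈ s then (1 : ℤ) else -1) hv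
          have hfe : (univ.filter fun i => (if i ∈ s then (1 : ℤ) else -1) = 1) = s := by
            ext i
            by_cases h : i ∈ s <;> simp [h]
          rw [hfe] at this
          exact this
        rw [hsum, hs.2]
        have : N / 2 ≤ N := Nat.div_le_self _ _
        push_cast
        omega
    case li =>
      intro l hl
      funext i
      obtain ⟨hv, _⟩ := hmem l hl
      by_cases h : l i = 1 <;> simp [h]
      rcases hv i with h' | h'
      · exact h'.symm
      · exact absurd h' h
    case ri =>
      intro s hs
      ext i
      by_cases h : i ∈ s <;> simp [h]
  refine ⟨?_, ?_, hcard, hcount⟩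
  · rw [Finset.sum_congr rfl hcount, Finset.sum_const, hcard, smul_eq_mul]
    -- choose N (N/2) * (N/2) = N * choose (N-1) (N/2-1)
    have key := Nat.add_one_mul_choose_eq (N - 1) (N / 2 - 1)
    have h1 : N - 1 + 1 = N := by omega
    have h2 : N / 2 - 1 + 1 = N / 2 := by omega
    rw [h1, h2] at key
    omega
  · congr 2
    omega
end
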